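/- Smoothness of VCG for β-XOS valuations and XOS bids (pointwise relaxed (1/β,1,1)-smoothness): Let v_1,...,v_n be β-fractionally subadditive valuations, let (O_1,...,O_n) be a welfare-optimal partition of M, and let a_i be the additive bid from β-fractional subadditivity applied to O_i. Then for every profile of conservative monotone XOS bids b with efficient VCG allocation (X_1(b),...,X_n(b)): Σ_i u_i((a_i, b_{-i}), v_i) ≥ (1/β)·Σ_i v_i(O_i) - Σ_i p_i(X_i(b), b_{-i}) - Σ_i b_i(X_i(b)). -/

import Mathlib

/-!
Because `y i` is efficient for the profile `(a_i, b_{-i})`, agent `i` does at least as well,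
measured by `a_i`, as by taking `O_i` at its VCG price; as `a_i` is supported on `O_i` and
conservative for `v_i` there, `a_i(O_i) - p_i(O_i) ≤ u_i`. Summing over agents, it remains to
show `Σ_i b_{-i}(M \ X_i) ≤ Σ_i b_{-i}(M \ O_i) + Σ_i b_i(X_i)`. By efficiency of `x`,
`b_{-i}(M \ X_i) ≤ Σ_{k ≠ i} b_k(X_k)`. Split each `X_k` along the XOS clause supporting `b_k`
at `X_k`: the parts `X_k \ O_i` can still be handed to the agents `k ≠ i` inside `M \ O_i`, and
the clause masses of the parts `X_k ∩ O_i` add up over `i` to at most `b_k(X_k)`.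
-/

/-- An XOS set function: a pointwise maximum of finitely many nonnegative additive
set functions. -/
def IsXOS {ι : Type*} (b : Finset ι → ℝ) : Prop :=
  ∃ (A : Finset (ι → ℝ)) (hA : A.Nonempty),
    (∀ a ∈ A, ∀ j, 0 ≤ a j) ∧
    ∀ S : Finset ι, b S = A.sup' hA (fun a => ∑ j ∈ S, a j)

/-- The bundle of agent `i` in the allocation encoded by the assignment `g`. -/
def part {n : ℕ} {ι : Type*} [Fintype ι] [DecidableEq ι]
    (g : ι → Fin n) (i : Fin n) : Finset ι :=
  Finset.univ.filter (fun j => g j = i)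

/-- `b_{-i}(T)`: the maximum total bid value achievable by allocating the items of
`T` among the agents other than `i`. -/
noncomputable def othersWelfare {n : ℕ} {ι : Type*} [Fintype ι] [DecidableEq ι]
    (b : Fin n → Finset ι → ℝ) (i : Fin n) (T : Finset ι) : ℝ :=
  (Finset.univ : Finset (ι → Fin n)).sup'
    (Finset.univ_nonempty_iff.mpr ⟨fun _ => i⟩)
    (fun g => ∑ k ∈ Finset.univ.erase i, b k (T.filter (fun j => g j = k)))

/-- The VCG payment of agent `i` for bundle `S` given the bids `b` of all agents
(only the bids of agents other than `i` matter). -/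
noncomputable def vcgPrice {n : ℕ} {ι : Type*} [Fintype ι] [DecidableEq ι]
    (b : Fin n → Finset ι → ℝ) (i : Fin n) (S : Finset ι) : ℝ :=
  othersWelfare b i Finset.univ - othersWelfare b i (Finset.univ \ S)

open Finset

lemma IsXOS.exists_supporting_additive {ι : Type*} {b : Finset ι → ℝ} (hb : IsXOS b)
    (X : Finset ι) :
    ∃ w : ι → ℝ, (∀ j, 0 ≤ w j) ∧ ∑ j ∈ X, w j = b X ∧ ∀ S, ∑ j ∈ S, w j ≤ b S := by
  obtain ⟨A, hA, hnonneg, hsup⟩ := hb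
  obtain ⟨w, hwA, hwX⟩ := exists_mem_eq_sup' hA (fun w => ∑ j ∈ X, w j)
  refine ⟨w, hnonneg w hwA, by rw [hsup, hwX], fun S => ?_⟩
  rw [hsup]
  exact le_sup' (fun w => ∑ j ∈ S, w j) hwA

lemma sum_le_of_support_subset {ι : Type*} [DecidableEq ι] {v : Finset ι → ℝ} (hv : Monotone v)
    {O : Finset ι} {a : ι → ℝ} (ha0 : ∀ j ∉ O, a j = 0) (ha : ∀ S ⊆ O, ∑ j ∈ S, a j ≤ v S) (Y : Finset ι) :
    ∑ j ∈ Y, a j ≤ v Y :=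
  calc ∑ j ∈ Y, a j
      = ∑ j ∈ Y ∩ O, a j := by
        rw [← sum_inter_add_sum_sdiff Y O, sum_eq_zero fun j hj => ha0 j (mem_sdiff.mp hj).2,
          add_zero]
    _ ≤ v (Y ∩ O) := ha _ inter_subset_right
    _ ≤ v Y := hv inter_subset_left

section VCG

variable {n : ℕ} {ι : Type*} [Fintype ι] [DecidableEq ι]

lemma disjoint_part {g : ι → Fin n} {i k : Fin n} (h : k ≠ i) :
    Disjoint (part g k) (part g i) :=
  disjoint_filter.mpr fun _ _ hk hi => h (hk.symm.trans hi)

lemma sum_sum_inter_part (g : ι → Fin n) (X : Finset ι) (f : ι → ℝ) :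
    ∑ i, ∑ j ∈ X ∩ part g i, f j = ∑ j ∈ X, f j := by
  simp only [part, inter_filter, inter_univ]
  exact sum_fiberwise X g f

variable (b : Fin n → Finset ι → ℝ)

lemma sum_sdiff_le_othersWelfare (g : ι → Fin n) (i : Fin n) (S : Finset ι) :
    ∑ k ∈ univ.erase i, b k (part g k \ S) ≤ othersWelfare b i (univ \ S) := by
  have hfilter : ∀ k, (univ \ S).filter (fun j => g j = k) = part g k \ S := by
    intro k
    ext j
    simp [part, and_comm]
  calc ∑ k ∈ univ.erase i, b k (part g k \ S)
      = ∑ k ∈ univ.erase i, b k ((univ \ S).filter (fun j => g j = k)) := by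
        simp only [hfilter]
    _ ≤ othersWelfare b i (univ \ S) := le_sup'
        (fun g : ι → Fin n => ∑ k ∈ univ.erase i, b k ((univ \ S).filter (fun j => g j = k)))
        (mem_univ g)

lemma exists_subset_part_sum_eq_othersWelfare (i : Fin n) (S : Finset ι) :
    ∃ g : ι → Fin n, S ⊆ part g i ∧
      ∑ k ∈ univ.erase i, b k (part g k) = othersWelfare b i (univ \ S) := by
  obtain ⟨g, -, hg⟩ := exists_mem_eq_sup' (univ_nonempty_iff.mpr ⟨fun _ => i⟩)
    (fun g : ι → Fin n => ∑ k ∈ univ.erase i, b k ((univ \ S).filter (fun j => g j = k)))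
  refine ⟨fun j => if j ∈ S then i else g j, fun j hj => by simp [part, hj], ?_⟩
  rw [othersWelfare, hg]
  refine sum_congr rfl fun k hk => congrArg (b k) ?_
  ext j
  by_cases hj : j ∈ S <;> simp [part, hj, Ne.symm (ne_of_mem_erase hk)]

/-- The hypothesis on `S` covers both a monotone `c` and an additive `c` supported on `S`. -/
lemma add_othersWelfare_compl_le (i : Fin n) (c : Finset ι → ℝ) (y : ι → Fin n)
    (hy : ∀ g : ι → Fin n, c (part g i) + ∑ k ∈ univ.erase i, b k (part g k) ≤
      c (part y i) + ∑ k ∈ univ.erase i, b k (part y k))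
    {S : Finset ι} (hS : ∀ T, S ⊆ T → c S ≤ c T) :
    c S + othersWelfare b i (univ \ S) ≤ c (part y i) + ∑ k ∈ univ.erase i, b k (part y k) := by
  obtain ⟨g, hSg, hg⟩ := exists_subset_part_sum_eq_othersWelfare b i S
  rw [← hg]
  exact (add_le_add_left (hS _ hSg) _).trans (hy g)

lemma sub_vcgPrice_le_of_efficient (i : Fin n) (c : Finset ι → ℝ) (y : ι → Fin n)
    (hy : ∀ g : ι → Fin n, c (part g i) + ∑ k ∈ univ.erase i, b k (part g k) ≤
      c (part y i) + ∑ k ∈ univ.erase i, b k (part y k))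
    {S : Finset ι} (hS : ∀ T, S ⊆ T → c S ≤ c T) :
    c S - vcgPrice b i S ≤ c (part y i) - vcgPrice b i (part y i) := by
  have hothers : ∑ k ∈ univ.erase i, b k (part y k) ≤
      othersWelfare b i (univ \ part y i) :=
    calc ∑ k ∈ univ.erase i, b k (part y k)
        = ∑ k ∈ univ.erase i, b k (part y k \ part y i) := sum_congr rfl fun k hk => by
          rw [sdiff_eq_self_of_disjoint (disjoint_part (ne_of_mem_erase hk))]
      _ ≤ _ := sum_sdiff_le_othersWelfare b y i (part y i)
  have := add_othersWelfare_compl_le b i c y hy hS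
  simp only [vcgPrice]
  linarith

lemma vcg_deviation (i : Fin n) {v : Finset ι → ℝ} (hv : Monotone v) {O : Finset ι}
    {a : ι → ℝ} (ha0 : ∀ j ∉ O, a j = 0) (ha : ∀ S ⊆ O, ∑ j ∈ S, a j ≤ v S) (y : ι → Fin n)
    (hy : ∀ g : ι → Fin n, (∑ j ∈ part g i, a j) + ∑ k ∈ univ.erase i, b k (part g k) ≤
      (∑ j ∈ part y i, a j) + ∑ k ∈ univ.erase i, b k (part y k)) :
    ∑ j ∈ O, a j - vcgPrice b i O ≤ v (part y i) - vcgPrice b i (part y i) := by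
  have hutility := sub_vcgPrice_le_of_efficient b i (fun T => ∑ j ∈ T, a j) y hy
    (S := O) fun T hOT => (sum_subset hOT fun j _ hj => ha0 j hj).le
  linarith [sum_le_of_support_subset hv ha0 ha (part y i)]

variable {b} (hmono : ∀ k, Monotone (b k)) {x : ι → Fin n}
  (hx : ∀ g : ι → Fin n, ∑ k, b k (part g k) ≤ ∑ k, b k (part x k))
include hmono hx

lemma othersWelfare_compl_le_of_efficient (i : Fin n) :
    othersWelfare b i (univ \ part x i) ≤ ∑ k ∈ univ.erase i, b k (part x k) := by
  have hsplit : ∀ g : ι → Fin n,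
      b i (part g i) + ∑ k ∈ univ.erase i, b k (part g k) = ∑ k, b k (part g k) :=
    fun g => add_sum_erase univ (fun k => b k (part g k)) (mem_univ i)
  have := add_othersWelfare_compl_le b i (b i) x (fun g => by simpa only [hsplit] using hx g)
    (S := part x i) fun _ => (hmono i ·)
  linarith

lemma sum_othersWelfare_compl_le (hXOS : ∀ k, IsXOS (b k)) (o : ι → Fin n) :
    ∑ i, othersWelfare b i (univ \ part x i) ≤
      ∑ i, othersWelfare b i (univ \ part o i) + ∑ k, b k (part x k) := by
  choose w hw0 hwX hwle using fun k => (hXOS k).exists_supporting_additive (part x k)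
  have hsplit : ∀ i k, b k (part x k) ≤
      b k (part x k \ part o i) + ∑ j ∈ part x k ∩ part o i, w k j := by
    intro i k
    rw [← hwX k, ← sum_inter_add_sum_sdiff (part x k) (part o i), add_comm]
    exact add_le_add_left (hwle k _) _
  have hmass : ∑ i, ∑ k ∈ univ.erase i, ∑ j ∈ part x k ∩ part o i, w k j ≤
      ∑ k, b k (part x k) :=
    calc ∑ i, ∑ k ∈ univ.erase i, ∑ j ∈ part x k ∩ part o i, w k j
        ≤ ∑ i, ∑ k, ∑ j ∈ part x k ∩ part o i, w k j :=
          sum_le_sum fun i _ => sum_le_sum_of_subset_of_nonneg (erase_subset _ _)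
            fun k _ _ => sum_nonneg fun j _ => hw0 k j
      _ = ∑ k, b k (part x k) := by
          rw [sum_comm]
          exact sum_congr rfl fun k _ => (sum_sum_inter_part o _ _).trans (hwX k)
  calc ∑ i, othersWelfare b i (univ \ part x i)
      ≤ ∑ i, ∑ k ∈ univ.erase i, b k (part x k) :=
        sum_le_sum fun i _ => othersWelfare_compl_le_of_efficient hmono hx i
    _ ≤ ∑ i, ∑ k ∈ univ.erase i,
          (b k (part x k \ part o i) + ∑ j ∈ part x k ∩ part o i, w k j) :=
        sum_le_sum fun i _ => sum_le_sum fun k _ => hsplit i k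
    _ = ∑ i, ∑ k ∈ univ.erase i, b k (part x k \ part o i) +
          ∑ i, ∑ k ∈ univ.erase i, ∑ j ∈ part x k ∩ part o i, w k j := by
        simp only [sum_add_distrib]
    _ ≤ _ := add_le_add (sum_le_sum fun i _ => sum_sdiff_le_othersWelfare b x i _) hmass

lemma sum_vcgPrice_le (hXOS : ∀ k, IsXOS (b k)) (o : ι → Fin n) :
    ∑ i, vcgPrice b i (part o i) ≤
      ∑ i, vcgPrice b i (part x i) + ∑ i, b i (part x i) := by
  have := sum_othersWelfare_compl_le hmono hx hXOS o
  simp only [vcgPrice, sum_sub_distrib]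
  linarith

end VCG

theorem vcg_pointwise_smooth_general {n : ℕ} {ι : Type*} [Fintype ι] [DecidableEq ι]
    (β : ℝ)
    (v : Fin n → Finset ι → ℝ)
    (hvmono : ∀ i, ∀ S T : Finset ι, S ⊆ T → v i S ≤ v i T)
    (o : ι → Fin n)
    (a : Fin n → ι → ℝ)
    (ha0 : ∀ i, ∀ j ∉ part o i, a i j = 0)
    (ha1 : ∀ i, v i (part o i) / β ≤ ∑ j ∈ part o i, a i j)
    (ha2 : ∀ i, ∀ S ⊆ part o i, ∑ j ∈ S, a i j ≤ v i S)
    (b : Fin n → Finset ι → ℝ)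
    (hXOS : ∀ i, IsXOS (b i))
    (hmono : ∀ i, ∀ S T : Finset ι, S ⊆ T → b i S ≤ b i T)
    (x : ι → Fin n)
    (hx : ∀ g : ι → Fin n, ∑ i, b i (part g i) ≤ ∑ i, b i (part x i))
    (y : Fin n → ι → Fin n)
    (hy : ∀ i, ∀ g : ι → Fin n,
      (∑ j ∈ part g i, a i j) + ∑ k ∈ Finset.univ.erase i, b k (part g k) ≤
        (∑ j ∈ part (y i) i, a i j) +
          ∑ k ∈ Finset.univ.erase i, b k (part (y i) k)) :
    (1 / β) * (∑ i, v i (part o i)) - (∑ i, vcgPrice b i (part x i)) -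
        (∑ i, b i (part x i)) ≤
      ∑ i, (v i (part (y i) i) - vcgPrice b i (part (y i) i)) := by
  have hvalue : 1 / β * ∑ i, v i (part o i) ≤ ∑ i, ∑ j ∈ part o i, a i j := by
    rw [one_div_mul_eq_div, sum_div]
    exact sum_le_sum fun i _ => ha1 i
  have hdeviation : ∑ i, (∑ j ∈ part o i, a i j - vcgPrice b i (part o i)) ≤
      ∑ i, (v i (part (y i) i) - vcgPrice b i (part (y i) i)) :=
    sum_le_sum fun i _ => vcg_deviation b i (fun _ _ => hvmono i _ _) (ha0 i) (ha2 i) (y i) (hy i)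
  have hpayment := sum_vcgPrice_le (fun k _ _ => hmono k _ _) hx hXOS o
  rw [sum_sub_distrib] at hdeviation
  linarith

/-- Pointwise relaxed `(1/β, 1, 1)`-smoothness of VCG for
β-fractionally subadditive valuations and conservative monotone XOS bids.
`o` encodes a welfare-optimal allocation `(O_1,…,O_n)`, `a i` is the additive bid
from β-fractional subadditivity applied to `O_i` (supported on `O_i`), `x` encodes
the efficient VCG allocation for the bids `b`, and `y i` encodes an efficient
allocation for the deviation profile `(a_i, b_{-i})`. Then
`Σ_i u_i((a_i,b_{-i}),v_i) ≥ (1/β)·Σ_i v_i(O_i) - Σ_i p_i(X_i(b),b_{-i}) - Σ_i b_i(X_i(b))`. -/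
theorem vcg_pointwise_smooth {n : ℕ} {ι : Type*} [Fintype ι] [DecidableEq ι]
    (hn : 2 ≤ n) (β : ℝ) (hβ : 1 ≤ β)
    (v : Fin n → Finset ι → ℝ)
    (hvnn : ∀ i S, 0 ≤ v i S)
    (hvmono : ∀ i, ∀ S T : Finset ι, S ⊆ T → v i S ≤ v i T)
    (o : ι → Fin n)
    (hopt : ∀ g : ι → Fin n, ∑ i, v i (part g i) ≤ ∑ i, v i (part o i))
    (a : Fin n → ι → ℝ)
    (ha0 : ∀ i, ∀ j ∉ part o i, a i j = 0)
    (ha1 : ∀ i, v i (part o i) / β ≤ ∑ j ∈ part o i, a i j)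
    (ha2 : ∀ i, ∀ S ⊆ part o i, ∑ j ∈ S, a i j ≤ v i S)
    (b : Fin n → Finset ι → ℝ)
    (hXOS : ∀ i, IsXOS (b i))
    (hmono : ∀ i, ∀ S T : Finset ι, S ⊆ T → b i S ≤ b i T)
    (hcons : ∀ i S, b i S ≤ v i S)
    (hbnn : ∀ i S, 0 ≤ b i S)
    (x : ι → Fin n)
    (hx : ∀ g : ι → Fin n, ∑ i, b i (part g i) ≤ ∑ i, b i (part x i))
    (y : Fin n → ι → Fin n)
    (hy : ∀ i, ∀ g : ι → Fin n,
      (∑ j ∈ part g i, a i j) + ∑ k ∈ Finset.univ.erase i, b k (part g k) ≤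
        (∑ j ∈ part (y i) i, a i j) +
          ∑ k ∈ Finset.univ.erase i, b k (part (y i) k)) :
    (1 / β) * (∑ i, v i (part o i)) - (∑ i, vcgPrice b i (part x i)) -
        (∑ i, b i (part x i)) ≤
      ∑ i, (v i (part (y i) i) - vcgPrice b i (part (y i) i)) :=
  vcg_pointwise_smooth_general β v hvmono o a ha0 ha1 ha2 b hXOS hmono x hx y hy
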